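/- Fix integers k ≥ 1, n ≥ 1, nonnegative integers s₁,…,s_k, t₁,…,t_k and nonnegative integers e_{i,j} = e_{j,i} for i ≠ j in {1,…,k}. Then for every flow f in the associated flow network and all permutations β₁,…,β_k of {1,…,2n}: F_{n,n}(β) ≥ |f|·(2n − 2). In particular F_{n,n}(β) ≥ X(2n−2), where X is the maximum value of a flow. -/

import Mathlib

/-!
For a permutation `σ` of a finite set of size `m`, `cycleCount σ` is the number of cycles
(fixed points count as cycles) and `permLen σ = m - cycleCount σ` (the minimal number of
transpositions needed to write `σ`).  We model `{1,…,2n}` as `Fin n ⊕ Fin n`, the first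
summand being `{1,…,n}` and the second `{n+1,…,2n}`.  `gammaNN n` is the product of the
two `n`-cycles `(1,2,…,n)` and `(n+1,…,2n)`.
-/

/-- The number of cycles of a permutation, where fixed points count as cycles. -/
noncomputable def cycleCount {α : Type*} [Fintype α] [DecidableEq α]
    (σ : Equiv.Perm α) : ℕ :=
  Multiset.card σ.cycleType + (Fintype.card α - σ.support.card)

/-- `|σ| = m - #(σ)`, the minimal number of transpositions whose product is `σ`. -/
noncomputable def permLen {α : Type*} [Fintype α] [DecidableEq α]
    (σ : Equiv.Perm α) : ℕ :=
  Fintype.card α - cycleCount σ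

/-- `γ_{n,n}`: the product of the two `n`-cycles `(1,…,n)` and `(n+1,…,2n)`. -/
def gammaNN (n : ℕ) : Equiv.Perm (Fin n ⊕ Fin n) :=
  Equiv.sumCongr (finRotate n) (finRotate n)

/-- A permutation of `{1,…,2n}` is connected if some cycle of it contains both an
element of `{1,…,n}` and an element of `{n+1,…,2n}`. -/
def IsConnectedPerm {n : ℕ} (β : Equiv.Perm (Fin n ⊕ Fin n)) : Prop :=
  ∃ a b : Fin n, β.SameCycle (Sum.inl a) (Sum.inr b)

/-- `F_{n,n}(α,β) = Σᵢ (sᵢ|γ_{n,n}⁻¹αᵢ| + tᵢ|αᵢ|) + Σ_{i<j} e_{i,j}|βᵢ⁻¹βⱼ| + Σᵢ dᵢ|βᵢαᵢ⁻¹|`. -/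
noncomputable def FnnPair (n k : ℕ) (s t d : Fin k → ℕ) (e : Fin k → Fin k → ℕ)
    (A B : Fin k → Equiv.Perm (Fin n ⊕ Fin n)) : ℕ :=
  (∑ i, (s i * permLen ((gammaNN n)⁻¹ * A i) + t i * permLen (A i)))
    + (∑ i, ∑ j, if i < j then e i j * permLen ((B i)⁻¹ * B j) else 0)
    + (∑ i, d i * permLen (B i * (A i)⁻¹))

/-- `F_{n,n}(β) = Σᵢ (sᵢ|γ_{n,n}⁻¹βᵢ| + tᵢ|βᵢ|) + Σ_{i<j} e_{i,j}|βᵢ⁻¹βⱼ|`. -/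
noncomputable def FnnOne (n k : ℕ) (s t : Fin k → ℕ) (e : Fin k → Fin k → ℕ)
    (B : Fin k → Equiv.Perm (Fin n ⊕ Fin n)) : ℕ :=
  (∑ i, (s i * permLen ((gammaNN n)⁻¹ * B i) + t i * permLen (B i)))
    + (∑ i, ∑ j, if i < j then e i j * permLen ((B i)⁻¹ * B j) else 0)

/-- Vertices of the flow network: `Sum.inl i` are the inner vertices `1,…,k`,
`Sum.inr true` is the source and `Sum.inr false` is the sink. -/
abbrev NetVertex (k : ℕ) := Fin k ⊕ Bool

/-- The source of the flow network. -/
def netSrc (k : ℕ) : NetVertex k := Sum.inr true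

/-- The sink of the flow network. -/
def netSnk (k : ℕ) : NetVertex k := Sum.inr false

/-- Capacities: `c(src,i) = sᵢ`, `c(i,snk) = tᵢ`, `c(i,j) = e_{i,j}` for `i ≠ j`,
and `0` on all other ordered pairs. -/
def netCap {k : ℕ} (s t : Fin k → ℕ) (e : Fin k → Fin k → ℕ) :
    NetVertex k → NetVertex k → ℤ
  | Sum.inr true, Sum.inl i => s i
  | Sum.inl i, Sum.inr false => t i
  | Sum.inl i, Sum.inl j => if i = j then 0 else e i j
  | _, _ => 0

/-- A flow with respect to capacities `c`: bounded by capacities, skew-symmetric,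
and conserved at every vertex other than the source and the sink. -/
def IsFlow {k : ℕ} (c f : NetVertex k → NetVertex k → ℤ) : Prop :=
  (∀ u v, f u v ≤ c u v) ∧ (∀ u v, f u v = - f v u) ∧
    (∀ u, u ≠ netSrc k → u ≠ netSnk k → ∑ v, f v u = 0)

/-- The value `|f| = Σᵤ f(src, u)` of a flow. -/
def flowValue {k : ℕ} (f : NetVertex k → NetVertex k → ℤ) : ℤ :=
  ∑ u, f (netSrc k) u

/-!
Write `V_σ` for the space of `σ`-invariant functions `α → ℚ`; its dimension is the number of
cycles `#(σ)`. Since `V_σ ∩ V_τ ⊆ V_{στ}`, we get `#(στ) ≥ #(σ) + #(τ) - |α|`, i.e.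
`|στ| ≤ |σ| + |τ|`, so `(σ, τ) ↦ |σ⁻¹τ|` is a metric on permutations.

Put the potential `φ(src) = 0`, `φ(i) = |γ⁻¹βᵢ|`, `φ(snk) = 2n - 2 ≤ |γ|` on the network. By the
triangle inequality, along each edge `φ` rises by at most the length that `F` charges for it
(`|γ⁻¹βᵢ|` on `src → i`, `|βᵢ|` on `i → snk`, `|βᵢ⁻¹βⱼ|` on `i — j`), while every unit of flow
rises by `φ(snk) - φ(src) = 2n - 2` in total. Weighting by capacities gives `|f| (2n - 2) ≤ F`.
-/

open Equiv Equiv.Perm Finset Module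

section PermLen

variable {α : Type*} [Fintype α] [DecidableEq α]

theorem permLen_eq_sum_cycleType (σ : Perm α) :
    permLen σ = (σ.cycleType.map (· - 1)).sum := by
  have hshift : (σ.cycleType.map (· - 1)).sum + Multiset.card σ.cycleType = σ.cycleType.sum := by
    have h : σ.cycleType.map (fun i => i - 1 + 1) = σ.cycleType.map id :=
      Multiset.map_congr rfl fun i hi => Nat.sub_add_cancel (one_lt_of_mem_cycleType hi).le
    simpa [Multiset.sum_map_add] using congrArg Multiset.sum h
  have hsupp : #σ.support ≤ Fintype.card α := card_le_univ _
  rw [sum_cycleType] at hshift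
  unfold permLen cycleCount
  omega

theorem permLen_inv (σ : Perm α) : permLen σ⁻¹ = permLen σ := by
  simp only [permLen_eq_sum_cycleType, cycleType_inv]

theorem permLen_inv_mul_comm (σ τ : Perm α) : permLen (σ⁻¹ * τ) = permLen (τ⁻¹ * σ) := by
  rw [← permLen_inv, mul_inv_rev, inv_inv]

theorem Equiv.Perm.Disjoint.permLen_mul {σ τ : Perm α} (h : σ.Disjoint τ) :
    permLen (σ * τ) = permLen σ + permLen τ := by
  simp only [permLen_eq_sum_cycleType, h.cycleType_mul, Multiset.map_add, Multiset.sum_add]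

theorem permLen_extendDomain {β : Type*} [Fintype β] [DecidableEq β] {p : β → Prop}
    [DecidablePred p] (σ : Perm α) (f : α ≃ Subtype p) :
    permLen (σ.extendDomain f) = permLen σ := by
  simp only [permLen_eq_sum_cycleType, cycleType_extendDomain]

theorem permLen_sumCongr {β : Type*} [Fintype β] [DecidableEq β] (σ : Perm α) (τ : Perm β) :
    permLen (Equiv.sumCongr σ τ : Perm (α ⊕ β)) = permLen σ + permLen τ := by
  classical
  have hl : Perm.sumCongr σ 1 = σ.extendDomain (Equiv.Set.rangeInl α β).symm := by
    ext (a | b)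
    · exact (extendDomain_apply_image σ (Equiv.Set.rangeInl α β).symm a).symm
    · exact (extendDomain_apply_not_subtype σ (Equiv.Set.rangeInl α β).symm (by simp)).symm
  have hr : Perm.sumCongr 1 τ = τ.extendDomain (Equiv.Set.rangeInr α β).symm := by
    ext (a | b)
    · exact (extendDomain_apply_not_subtype τ (Equiv.Set.rangeInr α β).symm (by simp)).symm
    · exact (extendDomain_apply_image τ (Equiv.Set.rangeInr α β).symm b).symm
  have hdisj : (Perm.sumCongr σ 1).Disjoint (Perm.sumCongr 1 τ) := by
    rintro (a | b) <;> simp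
  have hsplit : (Equiv.sumCongr σ τ : Perm (α ⊕ β)) = Perm.sumCongr σ 1 * Perm.sumCongr 1 τ := by
    simp
  rw [hsplit, hdisj.permLen_mul, hl, hr, permLen_extendDomain, permLen_extendDomain]

theorem permLen_finRotate (n : ℕ) : permLen (finRotate n) = n - 1 := by
  rcases lt_or_ge n 2 with hn | hn
  · interval_cases n <;> rfl
  · simp [permLen_eq_sum_cycleType, cycleType_finRotate_of_le hn]

end PermLen

section Invariants

variable {α : Type*} (K : Type*) [Field K]

def Equiv.Perm.invariants (σ : Perm α) : Submodule K (α → K) where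
  carrier := {v | ∀ x, v (σ x) = v x}
  add_mem' hv hw x := by simp [hv x, hw x]
  zero_mem' _ := rfl
  smul_mem' c v hv x := by simp [hv x]

variable {K}

theorem Equiv.Perm.invariants_inf_le_mul (σ τ : Perm α) :
    σ.invariants K ⊓ τ.invariants K ≤ (σ * τ).invariants K :=
  fun _ ⟨hσ, hτ⟩ x => (hσ (τ x)).trans (hτ x)

theorem Equiv.Perm.SameCycle.apply_eq_of_mem_invariants [Finite α] {σ : Perm α} {v : α → K}
    (hv : v ∈ σ.invariants K) {x y : α} (h : σ.SameCycle x y) : v x = v y := by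
  obtain ⟨i, -, rfl⟩ := h.exists_pow_eq'
  clear h
  induction i with
  | zero => rfl
  | succ i ih => rw [pow_succ', mul_apply, hv, ih]

variable (K) [Fintype α] [DecidableEq α]

noncomputable def Equiv.Perm.cyclePoint (σ : Perm α) (c : σ.cycleFactorsFinset) : α :=
  (mem_cycleFactorsFinset_iff.1 c.2).1.nonempty_support.choose

theorem Equiv.Perm.cyclePoint_mem_support (σ : Perm α) (c : σ.cycleFactorsFinset) :
    σ.cyclePoint c ∈ σ.support :=
  mem_cycleFactorsFinset_support_le c.2
    (mem_cycleFactorsFinset_iff.1 c.2).1.nonempty_support.choose_spec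

theorem Equiv.Perm.cycleOf_cyclePoint (σ : Perm α) (c : σ.cycleFactorsFinset) :
    σ.cycleOf (σ.cyclePoint c) = c :=
  (cycle_is_cycleOf (mem_cycleFactorsFinset_iff.1 c.2).1.nonempty_support.choose_spec c.2).symm

noncomputable def Equiv.Perm.invariantsRestrict (σ : Perm α) :
    σ.invariants K →ₗ[K] (σ.cycleFactorsFinset → K) × (Function.fixedPoints σ → K) where
  toFun v := (fun c => v.1 (σ.cyclePoint c), fun x => v.1 x)
  map_add' _ _ := rfl
  map_smul' _ _ := rfl

theorem Equiv.Perm.invariantsRestrict_injective (σ : Perm α) :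
    Function.Injective (σ.invariantsRestrict K) := by
  refine (injective_iff_map_eq_zero _).2 fun ⟨v, hv⟩ h => Subtype.ext <| funext fun x => ?_
  by_cases hx : σ x = x
  · exact congrFun (congrArg Prod.snd h) ⟨x, hx⟩
  · let c : σ.cycleFactorsFinset :=
      ⟨σ.cycleOf x, cycleOf_mem_cycleFactorsFinset_iff.2 (mem_support.2 hx)⟩
    have hsame : σ.SameCycle x (σ.cyclePoint c) := by
      have hpt := mem_support_cycleOf_iff.2 ⟨SameCycle.rfl, σ.cyclePoint_mem_support c⟩
      rw [σ.cycleOf_cyclePoint c] at hpt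
      exact (mem_support_cycleOf_iff' hx).1 hpt
    exact (hsame.apply_eq_of_mem_invariants hv).trans (congrFun (congrArg Prod.fst h) c)

theorem Equiv.Perm.invariantsRestrict_surjective (σ : Perm α) :
    Function.Surjective (σ.invariantsRestrict K) := by
  rintro ⟨a, b⟩
  let w : α → K := fun x => if hx : σ x = x then b ⟨x, hx⟩
    else a ⟨σ.cycleOf x, cycleOf_mem_cycleFactorsFinset_iff.2 (mem_support.2 hx)⟩
  have hw : w ∈ σ.invariants K := by
    intro x
    by_cases hx : σ x = x
    · rw [hx]
    · have hσx : σ (σ x) ≠ σ x := fun h => hx (σ.injective h)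
      simp only [w, dif_neg hx, dif_neg hσx, cycleOf_self_apply]
  refine ⟨⟨w, hw⟩, Prod.ext (funext fun c => ?_) (funext fun x => dif_pos x.2)⟩
  have hc : σ (σ.cyclePoint c) ≠ σ.cyclePoint c := mem_support.1 (σ.cyclePoint_mem_support c)
  simp only [invariantsRestrict, LinearMap.coe_mk, AddHom.coe_mk, w, dif_neg hc, cycleOf_cyclePoint]

theorem Equiv.Perm.finrank_invariants (σ : Perm α) :
    finrank K (σ.invariants K) = cycleCount σ := by
  rw [(LinearEquiv.ofBijective _ ⟨σ.invariantsRestrict_injective K,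
    σ.invariantsRestrict_surjective K⟩).finrank_eq, finrank_prod, finrank_fintype_fun_eq_card,
    finrank_fintype_fun_eq_card, card_fixedPoints, Fintype.card_coe, sum_cycleType, cycleCount,
    cycleType_def, Multiset.card_map]
  rfl

end Invariants

section Triangle

variable {α : Type*} [Fintype α] [DecidableEq α]

theorem cycleCount_le_card (σ : Perm α) :
    cycleCount σ ≤ Fintype.card α := by
  rw [← σ.finrank_invariants ℚ, ← finrank_fintype_fun_eq_card ℚ]
  exact Submodule.finrank_le _

theorem permLen_mul_le (σ τ : Perm α) :
    permLen (σ * τ) ≤ permLen σ + permLen τ := by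
  have hdim := Submodule.finrank_sup_add_finrank_inf_eq (σ.invariants ℚ) (τ.invariants ℚ)
  have hsup : finrank ℚ ↥(σ.invariants ℚ ⊔ τ.invariants ℚ) ≤ Fintype.card α :=
    (Submodule.finrank_le _).trans_eq (finrank_fintype_fun_eq_card ℚ)
  have hinf := Submodule.finrank_mono (σ.invariants_inf_le_mul (K := ℚ) τ)
  simp only [finrank_invariants] at hdim hinf
  have := cycleCount_le_card σ
  have := cycleCount_le_card τ
  unfold permLen
  omega

theorem permLen_inv_mul_le (ρ σ τ : Perm α) :
    permLen (ρ⁻¹ * τ) ≤ permLen (ρ⁻¹ * σ) + permLen (σ⁻¹ * τ) := by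
  simpa [mul_assoc] using permLen_mul_le (ρ⁻¹ * σ) (σ⁻¹ * τ)

end Triangle

theorem permLen_gammaNN (n : ℕ) : permLen (gammaNN n) = 2 * (n - 1) := by
  rw [gammaNN, permLen_sumCongr, permLen_finRotate, two_mul]

theorem Finset.sum_sum_eq_sum_sum_lt {ι M : Type*} [Fintype ι] [LinearOrder ι] [AddCommMonoid M]
    (g : ι → ι → M) (hg : ∀ i, g i i = 0) :
    ∑ i, ∑ j, g i j = ∑ i, ∑ j, if i < j then g i j + g j i else 0 := by
  have hsplit : ∀ i j, g i j = (if i < j then g i j else 0) + (if j < i then g i j else 0) := by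
    intro i j
    rcases lt_trichotomy i j with h | rfl | h
    · simp [h, h.not_gt]
    · simp [hg]
    · simp [h, h.not_gt]
  calc ∑ i, ∑ j, g i j
      = ∑ i, ∑ j, (if i < j then g i j else 0) + ∑ i, ∑ j, (if j < i then g i j else 0) := by
        simp only [← sum_add_distrib, ← hsplit]
    _ = ∑ i, ∑ j, (if i < j then g i j else 0) + ∑ i, ∑ j, (if i < j then g j i else 0) := by
        rw [sum_comm (f := fun i j => if j < i then g i j else 0)]
    _ = ∑ i, ∑ j, if i < j then g i j + g j i else 0 := by
        simp only [← sum_add_distrib, ite_add_ite, add_zero]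

section FlowPotential

variable {V : Type*} [Fintype V] {f : V → V → ℤ} {s t : V}

theorem sum_sum_mul_potential_sub (φ : V → ℤ) (hst : s ≠ t) (hskew : ∀ u v, f u v = -f v u)
    (hcons : ∀ u, u ≠ s → u ≠ t → ∑ v, f v u = 0) :
    ∑ u, ∑ v, f u v * (φ v - φ u) = 2 * (∑ v, f s v) * (φ t - φ s) := by
  have hin : ∀ u, ∑ v, f v u = -∑ v, f u v := fun u => by
    simp only [hskew _ u, sum_neg_distrib]
  have hout : ∀ u, u ≠ s → u ≠ t → ∑ v, f u v = 0 := fun u hs ht => by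
    simpa [hin] using hcons u hs ht
  have htotal : ∑ u, ∑ v, f u v = 0 := by
    have h : ∑ u, ∑ v, f u v = ∑ v, ∑ u, f u v := sum_comm
    simp only [hin, sum_neg_distrib] at h
    linarith
  have hts : ∑ v, f t v = -∑ v, f s v := by
    rw [Fintype.sum_eq_add s t hst fun u hu => hout u hu.1 hu.2] at htotal
    linarith
  calc ∑ u, ∑ v, f u v * (φ v - φ u)
      = ∑ v, (∑ u, f u v) * φ v - ∑ u, (∑ v, f u v) * φ u := by
        simp only [mul_sub, sum_sub_distrib, sum_mul]
        rw [sum_comm]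
    _ = -2 * ∑ u, (∑ v, f u v) * φ u := by
        simp only [hin, neg_mul, sum_neg_distrib]; ring
    _ = 2 * (∑ v, f s v) * (φ t - φ s) := by
        rw [Fintype.sum_eq_add s t hst fun u hu => by rw [hout u hu.1 hu.2, zero_mul], hts]
        ring

/-- Weak duality between flows and potentials: each unit of flow climbs `φ t - φ s` in total,
and an edge of capacity `c u v` can raise `φ` by at most `max (φ v - φ u) 0` per unit. -/
theorem flow_mul_potential_sub_le (c : V → V → ℤ) (φ : V → ℤ) (hst : s ≠ t)
    (hcap : ∀ u v, f u v ≤ c u v) (hskew : ∀ u v, f u v = -f v u)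
    (hcons : ∀ u, u ≠ s → u ≠ t → ∑ v, f v u = 0) :
    (∑ v, f s v) * (φ t - φ s) ≤ ∑ u, ∑ v, c u v * max (φ v - φ u) 0 := by
  have hedge : ∀ u v, f u v * (φ v - φ u)
      ≤ c u v * max (φ v - φ u) 0 + c v u * max (φ u - φ v) 0 := fun u v => by
    rcases le_total 0 (φ v - φ u) with h | h
    · rw [max_eq_left h, max_eq_right (by linarith)]
      nlinarith [hcap u v]
    · rw [max_eq_right h, max_eq_left (by linarith)]
      nlinarith [hcap v u, hskew u v]
  have hsum : ∑ u, ∑ v, f u v * (φ v - φ u)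
      ≤ ∑ u, ∑ v, (c u v * max (φ v - φ u) 0 + c v u * max (φ u - φ v) 0) :=
    sum_le_sum fun u _ => sum_le_sum fun v _ => hedge u v
  rw [sum_sum_mul_potential_sub φ hst hskew hcons] at hsum
  simp only [sum_add_distrib] at hsum
  rw [sum_comm (f := fun u v => c v u * max (φ u - φ v) 0)] at hsum
  linarith

end FlowPotential

theorem IsFlow.flowValue_mul_le {k : ℕ} {c f : NetVertex k → NetVertex k → ℤ} (hf : IsFlow c f)
    (φ : NetVertex k → ℤ) :
    flowValue f * (φ (netSnk k) - φ (netSrc k)) ≤ ∑ u, ∑ v, c u v * max (φ v - φ u) 0 :=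
  flow_mul_potential_sub_le c φ (by simp [netSrc, netSnk]) hf.1 hf.2.1 hf.2.2

noncomputable def fnnPotential (n k : ℕ) (B : Fin k → Perm (Fin n ⊕ Fin n)) : NetVertex k → ℤ
  | Sum.inl i => permLen ((gammaNN n)⁻¹ * B i)
  | Sum.inr true => 0
  | Sum.inr false => 2 * n - 2

theorem sum_netCap_mul_potential_le_FnnOne {n k : ℕ} {s t : Fin k → ℕ} {e : Fin k → Fin k → ℕ}
    (hsym : ∀ i j, i ≠ j → e i j = e j i) (B : Fin k → Perm (Fin n ⊕ Fin n)) :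
    ∑ u, ∑ v, netCap s t e u v * max (fnnPotential n k B v - fnnPotential n k B u) 0
      ≤ FnnOne n k s t e B := by
  set φ : Fin k → ℤ := fun i => permLen ((gammaNN n)⁻¹ * B i)
  have hdist : ∀ i j, |φ j - φ i| ≤ permLen ((B i)⁻¹ * B j) := fun i j => by
    have hij := permLen_inv_mul_le (gammaNN n) (B i) (B j)
    have hji := permLen_inv_mul_le (gammaNN n) (B j) (B i)
    rw [permLen_inv_mul_comm (B j)] at hji
    exact abs_sub_le_iff.2 ⟨by simp only [φ]; omega, by simp only [φ]; omega⟩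
  have hsnk : ∀ i, max (2 * n - 2 - φ i) 0 ≤ permLen (B i) := fun i => by
    have h := permLen_inv_mul_le 1 (B i) (gammaNN n)
    rw [inv_one, one_mul, one_mul, permLen_inv_mul_comm, permLen_gammaNN] at h
    exact max_le (by simp only [φ]; omega) (Nat.cast_nonneg _)
  have hedges : ∑ i, ∑ j, (if i = j then 0 else (e i j : ℤ)) * max (φ j - φ i) 0
      ≤ ∑ i, ∑ j, if i < j then (e i j : ℤ) * permLen ((B i)⁻¹ * B j) else 0 := by
    rw [Finset.sum_sum_eq_sum_sum_lt _ (by simp)]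
    refine sum_le_sum fun i _ => sum_le_sum fun j _ => ?_
    by_cases hlt : i < j
    · rw [if_pos hlt, if_pos hlt, if_neg hlt.ne, if_neg hlt.ne', hsym j i hlt.ne', ← mul_add,
        ← neg_sub (φ j), max_zero_add_max_neg_zero_eq_abs_self]
      exact mul_le_mul_of_nonneg_left (hdist i j) (Nat.cast_nonneg _)
    · rw [if_neg hlt, if_neg hlt]
  simp only [Fintype.sum_sum_type, Fintype.sum_bool, netCap, fnnPotential, zero_mul, add_zero,
    zero_add, sub_zero, sum_const_zero, FnnOne, Nat.cast_add, Nat.cast_sum, Nat.cast_mul,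
    Nat.cast_ite, Nat.cast_zero, sum_add_distrib]
  have hsrc : ∀ i, max (φ i) 0 = φ i := fun i => max_eq_left (Nat.cast_nonneg _)
  have hT := sum_le_sum fun i (_ : i ∈ univ) =>
    mul_le_mul_of_nonneg_left (hsnk i) (Nat.cast_nonneg (t i))
  simp only [φ] at hsrc hT hedges
  simp only [hsrc]
  linarith

theorem IsFlow.flowValue_mul_le_FnnOne {n k : ℕ} {s t : Fin k → ℕ} {e : Fin k → Fin k → ℕ}
    (hsym : ∀ i j, i ≠ j → e i j = e j i) {f : NetVertex k → NetVertex k → ℤ}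
    (hf : IsFlow (netCap s t e) f) (B : Fin k → Perm (Fin n ⊕ Fin n)) :
    flowValue f * (2 * n - 2) ≤ (FnnOne n k s t e B : ℤ) := by
  have hφ : fnnPotential n k B (netSnk k) - fnnPotential n k B (netSrc k) = 2 * n - 2 := by
    simp [fnnPotential, netSnk, netSrc]
  rw [← hφ]
  exact (hf.flowValue_mul_le _).trans (sum_netCap_mul_potential_le_FnnOne hsym B)

theorem FnnOne_ge_flowValue_general (n k : ℕ)
    (s t : Fin k → ℕ) (e : Fin k → Fin k → ℕ)
    (hsym : ∀ i j, i ≠ j → e i j = e j i) :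
    (∀ (f : NetVertex k → NetVertex k → ℤ), IsFlow (netCap s t e) f →
        ∀ B : Fin k → Equiv.Perm (Fin n ⊕ Fin n),
          flowValue f * (2 * n - 2) ≤ (FnnOne n k s t e B : ℤ)) ∧
      (∀ X : ℤ, IsGreatest {v : ℤ | ∃ f, IsFlow (netCap s t e) f ∧ flowValue f = v} X →
        ∀ B : Fin k → Equiv.Perm (Fin n ⊕ Fin n),
          X * (2 * n - 2) ≤ (FnnOne n k s t e B : ℤ)) := by
  refine ⟨fun f hf B => hf.flowValue_mul_le_FnnOne hsym B, fun X hX B => ?_⟩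
  obtain ⟨f, hf, rfl⟩ := hX.1
  exact hf.flowValue_mul_le_FnnOne hsym B

theorem FnnOne_ge_flowValue (n k : ℕ) (hn : 1 ≤ n) (hk : 1 ≤ k)
    (s t : Fin k → ℕ) (e : Fin k → Fin k → ℕ)
    (hsym : ∀ i j, i ≠ j → e i j = e j i) :
    (∀ (f : NetVertex k → NetVertex k → ℤ), IsFlow (netCap s t e) f →
        ∀ B : Fin k → Equiv.Perm (Fin n ⊕ Fin n),
          flowValue f * (2 * n - 2) ≤ (FnnOne n k s t e B : ℤ)) ∧
      (∀ X : ℤ, IsGreatest {v : ℤ | ∃ f, IsFlow (netCap s t e) f ∧ flowValue f = v} X →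
        ∀ B : Fin k → Equiv.Perm (Fin n ⊕ Fin n),
          X * (2 * n - 2) ≤ (FnnOne n k s t e B : ℤ)) :=
  FnnOne_ge_flowValue_general n k s t e hsym
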